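/- arXiv:1811.11642 — 6 statements merged into one kernel-verified Lean document; each statement's English description precedes it below -/
import Mathlib

section
/- For every μ > 0, setting λ = μ^{−4}: if cos(μ)·cosh(μ) + 1 = 0, then there exists a four times continuously differentiable function u : ℝ → ℝ, not identically zero on [0,1], with λ·u''''(t) − u(t) = 0 for all t ∈ (0,1), u(1) = u'(1) = 0, and u''(0) = u'''(0) = 0. -/
/-!
Every solution of `u'''' = μ⁴ u` is a combination of `cos μt`, `sin μt`, `cosh μt`, `sinh μt`.
The conditions `u''(0) = u'''(0) = 0` force `u = a (cos μt + cosh μt) - b (sin μt + sinh μt)`,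
and `u(1) = 0` is met by `a = sin μ + sinh μ`, `b = cos μ + cosh μ`. With this choice
`u'(1) = -2μ (cos μ cosh μ + 1)`, which vanishes by hypothesis, while `u(0) = 2a > 0`.
-/

open Real

noncomputable def trigHypComb (μ a b c d : ℝ) : ℝ → ℝ :=
  fun t => a * cos (μ * t) + b * sin (μ * t) + c * cosh (μ * t) + d * sinh (μ * t)

namespace trigHypComb

variable (μ a b c d : ℝ)

lemma hasDerivAt (t : ℝ) :
    HasDerivAt (trigHypComb μ a b c d) (trigHypComb μ (μ * b) (-(μ * a)) (μ * d) (μ * c) t) t := by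
  have hl : HasDerivAt (fun s : ℝ => μ * s) μ t := by
    simpa using (hasDerivAt_id t).const_mul μ
  have := (((((hasDerivAt_cos _).comp t hl).const_mul a).add
    (((hasDerivAt_sin _).comp t hl).const_mul b)).add
    (((hasDerivAt_cosh _).comp t hl).const_mul c)).add
    (((hasDerivAt_sinh _).comp t hl).const_mul d)
  exact this.congr_deriv (by simp only [trigHypComb]; ring)

lemma deriv_eq :
    deriv (trigHypComb μ a b c d) = trigHypComb μ (μ * b) (-(μ * a)) (μ * d) (μ * c) :=
  funext fun t => (hasDerivAt μ a b c d t).deriv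

lemma iterate_deriv_four :
    deriv^[4] (trigHypComb μ a b c d) = fun t => μ ^ 4 * trigHypComb μ a b c d t := by
  simp only [Function.iterate_succ, Function.iterate_zero, Function.comp_apply, deriv_eq]
  funext t
  simp only [id, trigHypComb]
  ring

lemma contDiff {n : WithTop ℕ∞} : ContDiff ℝ n (trigHypComb μ a b c d) := by
  have hl : ContDiff ℝ n (fun t : ℝ => μ * t) := contDiff_const.mul contDiff_id
  exact (((contDiff_const.mul (contDiff_cos.comp hl)).add
    (contDiff_const.mul (contDiff_sin.comp hl))).add
    (contDiff_const.mul (contDiff_cosh.comp hl))).add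
    (contDiff_const.mul (contDiff_sinh.comp hl))

@[simp]
lemma apply_zero : trigHypComb μ a b c d 0 = a + c := by
  simp [trigHypComb]

@[simp]
lemma apply_one :
    trigHypComb μ a b c d 1 = a * cos μ + b * sin μ + c * cosh μ + d * sinh μ := by
  simp [trigHypComb]

end trigHypComb

lemma sin_add_sinh_pos {x : ℝ} (hx : 0 < x) : 0 < sin x + sinh x := by
  have hsin : -sin x ≤ x := (neg_le_abs _).trans (abs_sin_le_abs.trans_eq (abs_of_pos hx))
  linarith [self_lt_sinh_iff.mpr hx]

noncomputable def clampedFreeMode (μ : ℝ) : ℝ → ℝ :=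
  trigHypComb μ (sin μ + sinh μ) (-(cos μ + cosh μ)) (sin μ + sinh μ) (-(cos μ + cosh μ))

namespace clampedFreeMode

variable (μ : ℝ)

lemma apply_zero : clampedFreeMode μ 0 = 2 * (sin μ + sinh μ) := by
  simp only [clampedFreeMode, trigHypComb.apply_zero]
  ring

lemma apply_one : clampedFreeMode μ 1 = 0 := by
  simp only [clampedFreeMode, trigHypComb.apply_one]
  ring

lemma deriv_one : deriv (clampedFreeMode μ) 1 = -2 * μ * (cos μ * cosh μ + 1) := by
  simp only [clampedFreeMode, trigHypComb.deriv_eq, trigHypComb.apply_one]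
  linear_combination (-μ) * sin_sq_add_cos_sq μ - μ * cosh_sq_sub_sinh_sq μ

lemma deriv_deriv_zero : deriv (deriv (clampedFreeMode μ)) 0 = 0 := by
  simp only [clampedFreeMode, trigHypComb.deriv_eq, trigHypComb.apply_zero]
  ring

lemma deriv_deriv_deriv_zero : deriv (deriv (deriv (clampedFreeMode μ))) 0 = 0 := by
  simp only [clampedFreeMode, trigHypComb.deriv_eq, trigHypComb.apply_zero]
  ring

end clampedFreeMode

/-- Converse direction: for μ > 0 with cos(μ)·cosh(μ) + 1 = 0 there exists, with
λ = μ⁻⁴, a four times continuously differentiable u, not identically zero on [0,1],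
with λu'''' − u = 0 on (0,1), u(1) = u'(1) = 0 and u''(0) = u'''(0) = 0. -/
theorem twofold_BVP_transcendental_equation_converse (μ : ℝ) (hμ : 0 < μ)
    (h : Real.cos μ * Real.cosh μ + 1 = 0) :
    ∃ u : ℝ → ℝ, ContDiff ℝ 4 u ∧
      (∃ t ∈ Set.Icc (0 : ℝ) 1, u t ≠ 0) ∧
      (∀ t ∈ Set.Ioo (0 : ℝ) 1, (1 / μ ^ 4) * (deriv^[4] u) t - u t = 0) ∧
      u 1 = 0 ∧ deriv u 1 = 0 ∧
      deriv (deriv u) 0 = 0 ∧ deriv (deriv (deriv u)) 0 = 0 := by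
  refine ⟨clampedFreeMode μ, trigHypComb.contDiff .., ⟨0, ⟨le_rfl, zero_le_one⟩, ?_⟩, ?_,
    clampedFreeMode.apply_one μ, by rw [clampedFreeMode.deriv_one, h, mul_zero],
    clampedFreeMode.deriv_deriv_zero μ, clampedFreeMode.deriv_deriv_deriv_zero μ⟩
  · rw [clampedFreeMode.apply_zero]
    exact (mul_pos two_pos (sin_add_sinh_pos hμ)).ne'
  · intro t _
    rw [clampedFreeMode, trigHypComb.iterate_deriv_four]
    field_simp
    ring
end

section
/- Let f(z) = cos(z)·cosh(z) + 1 and, for an integer i ≥ 1, let ζ_i = (i − 1/2)π. If i is odd, then f has a zero in the open interval (ζ_i, ζ_i + 1/cosh(ζ_i)); in particular f has a zero z with 0 < z − ζ_i < 2·e^{−ζ_i}. -/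
/-!
At ζ = π/2 + 2kπ we have cos ζ = 0, so f(ζ) = 1 > 0. With δ = 1/cosh ζ,
cos(ζ + δ) = -sin δ and cosh(ζ + δ) ≥ cosh ζ · cosh δ, hence
f(ζ + δ) ≤ 1 - (sin δ · cosh δ)/δ < 0 because sin δ · cosh δ > δ for 0 < δ < 2.
The intermediate value theorem gives the zero, and δ < 2e^{-ζ} since cosh ζ > e^ζ/2.
-/

open Real Set

namespace Real

lemma one_add_sq_div_two_le_cosh (x : ℝ) : 1 + x ^ 2 / 2 ≤ cosh x := by
  rw [← cosh_abs, ← sq_abs]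
  have hsinh : |x| / 2 ≤ sinh (|x| / 2) := self_le_sinh_iff.mpr (by positivity)
  have hcosh : cosh |x| = 1 + 2 * sinh (|x| / 2) ^ 2 := by
    rw [show |x| = 2 * (|x| / 2) by ring, cosh_two_mul, cosh_sq]
    ring_nf
  rw [hcosh]
  nlinarith [abs_nonneg x]

lemma cosh_mul_cosh_le_cosh_add {x y : ℝ} (hx : 0 ≤ x) (hy : 0 ≤ y) :
    cosh x * cosh y ≤ cosh (x + y) := by
  rw [cosh_add]
  have := mul_nonneg (sinh_nonneg_iff.mpr hx) (sinh_nonneg_iff.mpr hy)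
  linarith

lemma lt_sin_mul_cosh {x : ℝ} (hx₀ : 0 < x) (hx₂ : x < 2) : x < sin x * cosh x := by
  have hsin := sin_gt_sub_cube hx₀
  have hcosh := one_add_sq_div_two_le_cosh x
  have hsub : 0 < x - x ^ 3 / 6 := by nlinarith
  have hgap : 0 < x ^ 3 * (4 - x ^ 2) := mul_pos (pow_pos hx₀ 3) (by nlinarith)
  calc x < (x - x ^ 3 / 6) * (1 + x ^ 2 / 2) := by nlinarith
    _ ≤ sin x * cosh x := mul_le_mul hsin.le hcosh (by positivity) (hsub.trans hsin).le

lemma inv_cosh_lt_two_mul_exp_neg (x : ℝ) : 1 / cosh x < 2 * exp (-x) := by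
  have hcosh : exp x / 2 < cosh x := by
    rw [cosh_eq]
    linarith [exp_pos (-x)]
  rw [exp_neg, div_lt_iff₀ (cosh_pos x)]
  calc 1 = 2 * (exp x)⁻¹ * (exp x / 2) := by field_simp
    _ < 2 * (exp x)⁻¹ * cosh x := by gcongr

lemma cos_mul_cosh_add_inv_cosh_add_one_neg {ζ : ℝ} (hζ : 0 ≤ ζ) (hsin : sin ζ = 1) :
    cos (ζ + 1 / cosh ζ) * cosh (ζ + 1 / cosh ζ) + 1 < 0 := by
  set δ := 1 / cosh ζ with hδ
  have hcos : cos ζ = 0 := by nlinarith [sin_sq_add_cos_sq ζ]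
  have hδ₀ : 0 < δ := by positivity
  have hδ₁ : δ ≤ 1 := div_le_one_of_le₀ (one_le_cosh ζ) (cosh_pos ζ).le
  have hδζ : δ * cosh ζ = 1 := by rw [hδ]; field_simp
  have hsinδ : 0 < sin δ := sin_pos_of_pos_of_lt_pi hδ₀ (by linarith [pi_gt_three])
  have hcos_add : cos (ζ + δ) = -sin δ := by rw [cos_add, hcos, hsin]; ring
  have key : 1 < sin δ * cosh (ζ + δ) :=
    calc 1 = δ * cosh ζ := hδζ.symm
      _ < sin δ * cosh δ * cosh ζ :=
        mul_lt_mul_of_pos_right (lt_sin_mul_cosh hδ₀ (by linarith)) (cosh_pos ζ)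
      _ = sin δ * (cosh ζ * cosh δ) := by ring
      _ ≤ sin δ * cosh (ζ + δ) := by gcongr; exact cosh_mul_cosh_le_cosh_add hζ hδ₀.le
  rw [hcos_add]
  linarith

lemma exists_cos_mul_cosh_add_one_eq_zero {ζ : ℝ} (hζ : 0 ≤ ζ) (hsin : sin ζ = 1) :
    ∃ z ∈ Ioo ζ (ζ + 1 / cosh ζ), cos z * cosh z + 1 = 0 := by
  have hcos : cos ζ = 0 := by nlinarith [sin_sq_add_cos_sq ζ]
  have hle : ζ ≤ ζ + 1 / cosh ζ := le_add_of_nonneg_right (by positivity)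
  refine intermediate_value_Ioo' hle (by fun_prop) ⟨?_, ?_⟩
  · exact cos_mul_cosh_add_inv_cosh_add_one_neg hζ hsin
  · rw [hcos]; norm_num

end Real

theorem zero_of_cos_cosh_add_one_odd_general (i : ℕ) (hodd : Odd i) :
    ∃ z : ℝ, Real.cos z * Real.cosh z + 1 = 0 ∧
      ((i : ℝ) - 1 / 2) * π < z ∧
      z < ((i : ℝ) - 1 / 2) * π + 1 / Real.cosh (((i : ℝ) - 1 / 2) * π) ∧
      0 < z - ((i : ℝ) - 1 / 2) * π ∧
      z - ((i : ℝ) - 1 / 2) * π < 2 * Real.exp (-(((i : ℝ) - 1 / 2) * π)) := by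
  obtain ⟨k, rfl⟩ := hodd
  set ζ : ℝ := ((↑(2 * k + 1) : ℝ) - 1 / 2) * π
  have hζ : π / 2 + (k : ℤ) * (2 * π) = ζ := by push_cast [ζ]; ring
  have hζ₀ : 0 ≤ ζ := by rw [← hζ]; have := pi_pos; positivity
  obtain ⟨z, ⟨hz₁, hz₂⟩, hz⟩ :=
    exists_cos_mul_cosh_add_one_eq_zero hζ₀ (sin_eq_one_iff.mpr ⟨k, hζ⟩)
  refine ⟨z, hz, hz₁, hz₂, sub_pos.mpr hz₁, ?_⟩
  linarith [inv_cosh_lt_two_mul_exp_neg ζ]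

/-- For odd i ≥ 1 and ζ_i = (i − 1/2)π, the function f(z) = cos(z)cosh(z) + 1 has a
zero in the open interval (ζ_i, ζ_i + 1/cosh(ζ_i)); in particular it has a zero z
with 0 < z − ζ_i < 2e^{−ζ_i}. -/
theorem zero_of_cos_cosh_add_one_odd (i : ℕ) (hi : 1 ≤ i) (hodd : Odd i) :
    ∃ z : ℝ, Real.cos z * Real.cosh z + 1 = 0 ∧
      ((i : ℝ) - 1 / 2) * π < z ∧
      z < ((i : ℝ) - 1 / 2) * π + 1 / Real.cosh (((i : ℝ) - 1 / 2) * π) ∧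
      0 < z - ((i : ℝ) - 1 / 2) * π ∧
      z - ((i : ℝ) - 1 / 2) * π < 2 * Real.exp (-(((i : ℝ) - 1 / 2) * π)) :=
  zero_of_cos_cosh_add_one_odd_general i hodd
end

section
/- Let f(z) = cos(z)·cosh(z) + 1 and, for an integer i ≥ 2, let ζ_i = (i − 1/2)π. If i is even, then f has a zero in the open interval (ζ_i − 4·e^{−ζ_i}, ζ_i). -/
/-!
At ζ = (i − 1/2)π with i even, cos ζ = 0, so f(ζ) = 1. At ζ − δ, with δ = 4e^{−ζ}, one has
cos(ζ − δ) = −sin δ, while sin δ ≈ δ and cosh(ζ − δ) ≈ e^ζ/2 = 2/δ, so that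
sin δ · cosh(ζ − δ) ≈ 2 > 1 (the errors are O(δ), harmless once e^ζ ≥ 9) and f(ζ − δ) < 0. The intermediate value theorem gives the zero.
-/

open Real

lemma cos_half_odd_mul_pi_sub_of_even {i : ℤ} (hi : Even i) (x : ℝ) :
    cos ((i - 1 / 2) * π - x) = -sin x := by
  obtain ⟨k, rfl⟩ := hi
  have hshift : ((k + k : ℤ) - 1 / 2 : ℝ) * π - x = -(x + π / 2) + k * (2 * π) := by
    push_cast; ring
  rw [hshift, cos_add_int_mul_two_pi, cos_neg, cos_add_pi_div_two]

lemma exp_mul_one_sub_lt_two_mul_cosh_sub (x y : ℝ) : exp x * (1 - y) < 2 * cosh (x - y) := by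
  have hexp : exp x * (1 - y) ≤ exp (x - y) := by
    rw [sub_eq_add_neg x, exp_add]
    gcongr
    linarith [add_one_le_exp (-y)]
  linarith [cosh_eq (x - y), exp_pos (-(x - y))]

lemma one_lt_sin_mul_cosh_sub_four_mul_exp_neg {ζ : ℝ} (hζ : 9 ≤ exp ζ) :
    1 < sin (4 * exp (-ζ)) * cosh (ζ - 4 * exp (-ζ)) := by
  set δ := 4 * exp (-ζ)
  have hprod : δ * exp ζ = 4 := by simp [δ, mul_assoc, ← exp_add]
  have hδ_pos : 0 < δ := by positivity
  have hδ_le : δ ≤ 4 / 9 := by nlinarith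
  have hsin : δ - δ ^ 3 / 6 < sin δ := sin_gt_sub_cube hδ_pos
  have hcosh := exp_mul_one_sub_lt_two_mul_cosh_sub ζ δ
  have hsin_lower_nonneg : 0 ≤ δ - δ ^ 3 / 6 := by
    nlinarith [mul_le_mul_of_nonneg_left (by nlinarith : δ ^ 2 ≤ 1) hδ_pos.le]
  calc 1 < (4 - 2 * δ ^ 2 / 3) * (1 - δ) / 2 := by nlinarith
    _ = (δ - δ ^ 3 / 6) * (exp ζ * (1 - δ) / 2) := by
      linear_combination (-(1 - δ) * (1 - δ ^ 2 / 6) / 2) * hprod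
    _ ≤ sin δ * cosh (ζ - δ) :=
      mul_le_mul hsin.le (by linarith) (by nlinarith [exp_pos ζ]) (by linarith)

/-- For even i ≥ 2 and ζ_i = (i − 1/2)π, the function f(z) = cos(z)cosh(z) + 1 has a
zero in the open interval (ζ_i − 4e^{−ζ_i}, ζ_i). -/
theorem zero_of_cos_cosh_add_one_even (i : ℕ) (hi : 2 ≤ i) (heven : Even i) :
    ∃ z : ℝ, Real.cos z * Real.cosh z + 1 = 0 ∧
      ((i : ℝ) - 1 / 2) * π - 4 * Real.exp (-(((i : ℝ) - 1 / 2) * π)) < z ∧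
      z < ((i : ℝ) - 1 / 2) * π := by
  set ζ : ℝ := ((i : ℝ) - 1 / 2) * π
  set δ : ℝ := 4 * exp (-ζ)
  have hcos (x : ℝ) : cos (ζ - x) = -sin x := by
    have := cos_half_odd_mul_pi_sub_of_even (i := i) (by exact_mod_cast heven) x
    rwa [Int.cast_natCast] at this
  have hζ : 4 ≤ ζ := by
    have : (2 : ℝ) ≤ i := by exact_mod_cast hi
    have := pi_gt_three
    show 4 ≤ ((i : ℝ) - 1 / 2) * π
    nlinarith
  have hexp : 9 ≤ exp ζ := by
    calc 9 ≤ (ζ / 2 + 1) ^ 2 := by nlinarith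
      _ ≤ exp (ζ / 2) ^ 2 := pow_le_pow_left₀ (by linarith) (add_one_le_exp _) 2
      _ = exp ζ := by rw [sq, ← exp_add, add_halves]
  have hleft : cos (ζ - δ) * cosh (ζ - δ) + 1 < 0 := by
    rw [hcos, neg_mul]
    linarith [one_lt_sin_mul_cosh_sub_four_mul_exp_neg hexp]
  have hright : cos ζ * cosh ζ + 1 = 1 := by simpa using congrArg (· * cosh ζ + 1) (hcos 0)
  obtain ⟨z, hz, hfz⟩ := intermediate_value_Ioo (sub_le_self ζ (by positivity))
    (f := fun z ↦ cos z * cosh z + 1) (by fun_prop) ⟨hleft, by rw [hright]; norm_num⟩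
  exact ⟨z, hfz, hz⟩
end

section
/- For every real x with 0 < x ≤ e^{−3π/2}, one has (sin(4x)/(2x))·e^{−4x} > 1; equivalently, sin(4x)·e^{−4x} > 2x on this interval. -/
/-!
Near `0` we have `sin t > t - t³/6` and `exp (-t) ≥ 1 - t`, so `sin t · exp (-t) > t / 2` as soon
as `t ≤ 1/4`. Since `3π/2 > 4` and `e > 2`, we have `e^{-3π/2} < 1/16`, so `t = 4x` lies in that range.
-/

open Real

lemma half_lt_sin_mul_exp_neg {t : ℝ} (ht0 : 0 < t) (ht : t ≤ 1 / 4) :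
    t / 2 < sin t * exp (-t) := by
  have hsin : t - t ^ 3 / 6 < sin t := sin_gt_sub_cube ht0
  have hexp : 1 - t ≤ exp (-t) := by linarith [add_one_le_exp (-t)]
  have htaylor_pos : 0 < t - t ^ 3 / 6 := by nlinarith [mul_pos ht0 ht0]
  calc t / 2 < (t - t ^ 3 / 6) * (1 - t) := by nlinarith [mul_pos ht0 ht0]
    _ ≤ sin t * exp (-t) := mul_le_mul hsin.le hexp (by linarith) (htaylor_pos.trans hsin).le

lemma exp_neg_three_pi_div_two_lt : exp (-(3 * π / 2)) < 1 / 16 := by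
  have htwo : 2 < exp 1 := by linarith [add_one_lt_exp one_ne_zero]
  have hfour : 16 < exp 4 := by
    rw [show (4 : ℝ) = (4 : ℕ) * 1 by norm_num, exp_nat_mul]
    nlinarith [pow_lt_pow_left₀ htwo zero_le_two four_ne_zero]
  calc exp (-(3 * π / 2)) < exp (-4) := exp_lt_exp.mpr (by linarith [pi_gt_three])
    _ = (exp 4)⁻¹ := exp_neg 4
    _ < 1 / 16 := by rw [one_div]; exact inv_strictAnti₀ (by norm_num) hfour

/-- For 0 < x ≤ e^{−3π/2} one has (sin(4x)/(2x))·e^{−4x} > 1; equivalently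
sin(4x)·e^{−4x} > 2x on this interval. -/
theorem h_gt_one (x : ℝ) (hx0 : 0 < x) (hx : x ≤ Real.exp (-(3 * π / 2))) :
    1 < (Real.sin (4 * x) / (2 * x)) * Real.exp (-(4 * x)) ∧
    2 * x < Real.sin (4 * x) * Real.exp (-(4 * x)) := by
  have key : 2 * x < sin (4 * x) * exp (-(4 * x)) := by
    have := half_lt_sin_mul_exp_neg (t := 4 * x) (by positivity)
      (by linarith [exp_neg_three_pi_div_two_lt])
    linarith
  refine ⟨?_, key⟩
  rwa [div_mul_eq_mul_div, one_lt_div (by positivity)]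
end

section
/- Let n ≥ 1 be an integer. For every z ∈ ℂ, det(A_n(z)) = z^{n(2n−1)} · ∑_{I ⊆ {0,…,2n−1}, |I| = n} c_I · cosh(α_I·z) · cos(β_I·z), where the sum runs over all n-element subsets I of {0,…,2n−1}. -/
open Real Complex Finset

/-- ω_k = exp(iπ(2k + [n]₂)/(2n)). -/
noncomputable def omegaRoot (n k : ℕ) : ℂ :=
  Complex.exp (Complex.I * (Real.pi : ℂ) * (2 * (k : ℂ) + ((n % 2 : ℕ) : ℂ)) / (2 * (n : ℂ)))

/-- Vandermonde-type product ∏_{k,ℓ ∈ I, k<ℓ} (ω_ℓ − ω_k). -/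
noncomputable def vdmProd (n : ℕ) (I : Finset ℕ) : ℂ :=
  ∏ p ∈ (I ×ˢ I).filter (fun p => p.1 < p.2), (omegaRoot n p.2 - omegaRoot n p.1)

/-- c_I = (−1)^{n(n+1)/2} · i^{[n]₂·n} · ∏_{k<ℓ∈I}(ω_ℓ−ω_k) · ∏_{k<ℓ∈C}(ω_ℓ−ω_k),
where C = {0,…,2n−1} \ I. -/
noncomputable def cCoeff (n : ℕ) (I : Finset ℕ) : ℂ :=
  (-1) ^ (n * (n + 1) / 2) * Complex.I ^ ((n % 2) * n) *
    vdmProd n I * vdmProd n (Finset.range (2 * n) \ I)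

/-- The matrix A_n(z) with entries ω_k^j z^j e^{ω_k z} for j < n and ω_k^j z^j for
j ≥ n. -/
noncomputable def An (n : ℕ) (z : ℂ) : Matrix (Fin (2 * n)) (Fin (2 * n)) ℂ :=
  Matrix.of (fun j k : Fin (2 * n) =>
    if (j : ℕ) < n then omegaRoot n k ^ (j : ℕ) * z ^ (j : ℕ) * Complex.exp (omegaRoot n k * z)
    else omegaRoot n k ^ (j : ℕ) * z ^ (j : ℕ))

/-!
Pull `z ^ j` out of row `j` and expand the remaining determinant along its first `n` rows
(multilinearity in the columns): this gives `∑_I c_I e^{s_I z}` with `s_I = ∑_{k ∈ I} ω_k`,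
where the coefficient of `I` is a signed product of two Vandermonde determinants and the
factors `ω_k ^ n` of the lower block produce the constant in `c_I`. Two symmetries pair the
terms. Passing to the complement keeps `c_I` and negates `s_I`, because `∑ ω_k = 0`.
Conjugation permutes the `ω_k` and inverts them; reversing the rows of each block shows
that inverting the nodes only rescales the expansion, and evaluating at `t = 1`, where the
determinant is a nonzero Vandermonde determinant, shows that the scalar is `1`. Averaging
`e^{sz}, e^{-sz}, e^{s̄z}, e^{-s̄z}` gives `cosh (Re s · z) · cos (Im s · z)`.
-/

open scoped Matrix

section FinsetVandermonde

variable {R ι : Type*} [CommRing R] [LinearOrder ι]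

def finsetVandermonde (x : ι → R) (S : Finset ι) : R :=
  ∏ p ∈ (S ×ˢ S).filter (fun p => p.1 < p.2), (x p.2 - x p.1)

theorem finsetVandermonde_eq_prod_prod (x : ι → R) (S : Finset ι) :
    finsetVandermonde x S = ∏ i ∈ S, ∏ j ∈ S.filter (i < ·), (x j - x i) := by
  rw [finsetVandermonde, prod_filter, prod_product]
  exact prod_congr rfl fun i _ => (prod_filter _ _).symm

theorem finsetVandermonde_map {κ : Type*} [LinearOrder κ] (f : ι ↪o κ) (x : κ → R)
    (S : Finset ι) :
    finsetVandermonde x (S.map f.toEmbedding) = finsetVandermonde (x ∘ f) S := by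
  simp [finsetVandermonde_eq_prod_prod, filter_map, Function.comp_def]

theorem det_vandermonde_comp_orderEmbOfFin (x : ι → R) (S : Finset ι) {m : ℕ}
    (h : S.card = m) :
    (Matrix.vandermonde (x ∘ S.orderEmbOfFin h)).det = finsetVandermonde x S := by
  conv_rhs => rw [← S.map_orderEmbOfFin_univ h, finsetVandermonde_map,
    finsetVandermonde_eq_prod_prod]
  simp [Matrix.det_vandermonde, filter_lt_eq_Ioi]

end FinsetVandermonde

section FinsetFin

variable {N : ℕ}

theorem strictMonoOn_swap_of_val_succ {k l : Fin N} (hkl : (l : ℕ) = k + 1)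
    {T : Set (Fin N)} (hT : ¬(k ∈ T ∧ l ∈ T)) : StrictMonoOn (Equiv.swap k l) T := by
  intro a ha b hb hab
  simp only [Equiv.swap_apply_def]
  rw [Fin.lt_def] at hab ⊢
  split_ifs <;> subst_vars <;> first | omega | (exfalso; tauto)

theorem exists_adjacent_notMem_mem {m : ℕ} {S : Finset (Fin N)} (hS : S.card = m)
    {b : Fin N} (hb : b ∈ S) (hmb : m ≤ b) :
    ∃ k l : Fin N, (l : ℕ) = k + 1 ∧ k ∉ S ∧ l ∈ S := by
  by_contra! hstep
  have hdown : ∀ d : ℕ, ∀ a : Fin N, (a : ℕ) + d = b → a ∈ S := by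
    intro d
    induction d with
    | zero => intro a h; rwa [show a = b from Fin.ext (by simpa using h)]
    | succ d ih =>
      intro a h
      by_contra ha
      exact hstep a ⟨a + 1, by omega⟩ rfl ha (ih _ (by simp only; omega))
  have hsub : Iic b ⊆ S := fun a ha =>
    hdown (b - a) a (by have := mem_Iic.mp ha; rw [Fin.le_def] at this; omega)
  have := card_le_card hsub
  rw [Fin.card_Iic] at this
  omega

theorem map_valEmbedding_eq_range_of_forall_lt {m : ℕ} {S : Finset (Fin N)} (hS : S.card = m)
    (h : ∀ j ∈ S, (j : ℕ) < m) : S.map Fin.valEmbedding = range m :=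
  eq_of_subset_of_card_le
    (fun j hj => by obtain ⟨j, hj', rfl⟩ := mem_map.mp hj; simpa using h j hj') (by simp [hS])

theorem sum_val_map_swap_add_one {S : Finset (Fin N)} {k l : Fin N}
    (hkl : (l : ℕ) = k + 1) (hk : k ∉ S) (hl : l ∈ S) :
    ∑ x ∈ S.map (Equiv.swap k l).toEmbedding, (x : ℕ) + 1 = ∑ x ∈ S, (x : ℕ) := by
  have hfix :
      ∑ x ∈ S.erase l, ((Equiv.swap k l x : Fin N) : ℕ) = ∑ x ∈ S.erase l, (x : ℕ) :=
    sum_congr rfl fun x hx => congrArg Fin.val <| Equiv.swap_apply_of_ne_of_ne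
      (ne_of_mem_of_not_mem (mem_of_mem_erase hx) hk) (ne_of_mem_erase hx)
  simp only [sum_map, Equiv.coe_toEmbedding]
  rw [← add_sum_erase S _ hl, ← add_sum_erase S _ hl, hfix, Equiv.swap_apply_right, hkl]
  omega

end FinsetFin

section Unshuffle

variable {n : ℕ}

def finSumFinTwoMul (n : ℕ) : Fin n ⊕ Fin n ≃ Fin (2 * n) :=
  finSumFinEquiv.trans (finCongr (two_mul n).symm)

@[simp] theorem finSumFinTwoMul_inl_val (i : Fin n) :
    (finSumFinTwoMul n (.inl i) : ℕ) = i := by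
  simp [finSumFinTwoMul]

@[simp] theorem finSumFinTwoMul_inr_val (i : Fin n) :
    (finSumFinTwoMul n (.inr i) : ℕ) = n + i := by
  simp [finSumFinTwoMul, add_comm]

theorem card_compl_eq_of_card_eq {S : Finset (Fin (2 * n))} (hS : S.card = n) :
    Sᶜ.card = n := by
  rw [card_compl, hS, Fintype.card_fin]
  omega

def unshuffle (S : Finset (Fin (2 * n))) (hS : S.card = n) : Equiv.Perm (Fin (2 * n)) :=
  (finSumFinTwoMul n).symm.trans <|
    (Equiv.sumCongr (S.orderIsoOfFin hS).toEquiv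
      ((Sᶜ.orderIsoOfFin (card_compl_eq_of_card_eq hS)).toEquiv.trans
        (Equiv.subtypeEquivRight fun _ => mem_compl))).trans
    (Equiv.sumCompl (· ∈ S))

variable {S : Finset (Fin (2 * n))}

@[simp] theorem unshuffle_inl (hS : S.card = n) (i : Fin n) :
    unshuffle S hS (finSumFinTwoMul n (.inl i)) = S.orderEmbOfFin hS i := by
  simp [unshuffle]

@[simp] theorem unshuffle_inr (hS : S.card = n) (i : Fin n) :
    unshuffle S hS (finSumFinTwoMul n (.inr i)) =
      Sᶜ.orderEmbOfFin (card_compl_eq_of_card_eq hS) i := by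
  simp [unshuffle]

theorem eq_unshuffle (hS : S.card = n) {σ : Equiv.Perm (Fin (2 * n))}
    (hl : ∀ i, σ (finSumFinTwoMul n (.inl i)) ∈ S)
    (hl' : StrictMono fun i => σ (finSumFinTwoMul n (.inl i)))
    (hr : ∀ i, σ (finSumFinTwoMul n (.inr i)) ∉ S)
    (hr' : StrictMono fun i => σ (finSumFinTwoMul n (.inr i))) :
    σ = unshuffle S hS := by
  have hleft := orderEmbOfFin_unique hS hl hl'
  have hright := orderEmbOfFin_unique (card_compl_eq_of_card_eq hS)
    (fun i => mem_compl.mpr (hr i)) hr'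
  ext x
  obtain ⟨i | i, rfl⟩ := (finSumFinTwoMul n).surjective x
  · simp [← hleft]
  · simp [← hright]

theorem unshuffle_map (hS : S.card = n) (τ : Equiv.Perm (Fin (2 * n)))
    (hτS : StrictMonoOn τ S) (hτSc : StrictMonoOn τ Sᶜ)
    (hS' : (S.map τ.toEmbedding).card = n) :
    unshuffle (S.map τ.toEmbedding) hS' = τ * unshuffle S hS := by
  symm
  have hSc := card_compl_eq_of_card_eq hS
  apply eq_unshuffle hS'
  · simp [orderEmbOfFin_mem]
  · intro i j hij
    simpa using hτS (orderEmbOfFin_mem _ _ _) (orderEmbOfFin_mem _ _ _)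
      ((S.orderEmbOfFin hS).strictMono hij)
  · simpa using fun i => mem_compl.mp (orderEmbOfFin_mem Sᶜ hSc i)
  · intro i j hij
    simpa using hτSc (mem_compl.mp (orderEmbOfFin_mem Sᶜ hSc i))
      (mem_compl.mp (orderEmbOfFin_mem Sᶜ hSc j)) ((Sᶜ.orderEmbOfFin hSc).strictMono hij)

theorem unshuffle_eq_one (hS : S.card = n) (h : ∀ j ∈ S, (j : ℕ) < n) :
    unshuffle S hS = 1 := by
  have hmem (j : Fin (2 * n)) : j ∈ S ↔ (j : ℕ) < n := by
    rw [← mem_range, ← map_valEmbedding_eq_range_of_forall_lt hS h]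
    simp [Fin.val_inj]
  symm
  apply eq_unshuffle hS
  · simp [hmem]
  · intro i j hij
    rw [Fin.lt_def]
    simpa using hij
  · simp [hmem]
  · intro i j hij
    rw [Fin.lt_def]
    simpa using hij

theorem sign_unshuffle (S : Finset (Fin (2 * n))) (hS : S.card = n) :
    Equiv.Perm.sign (unshuffle S hS) = (-1) ^ (∑ k ∈ S, (k : ℕ) + n * (n - 1) / 2) := by
  induction hsum : ∑ k ∈ S, (k : ℕ) using Nat.strong_induction_on generalizing S with
  | _ s ih =>
  by_cases hhigh : ∃ b ∈ S, n ≤ (b : ℕ)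
  · -- Moving some `k + 1 ∈ S` down to `k ∉ S` lowers the sum by one and adds a transposition.
    obtain ⟨b, hb, hnb⟩ := hhigh
    obtain ⟨k, l, hkl, hk, hl⟩ := exists_adjacent_notMem_mem hS hb hnb
    have hS' : (S.map (Equiv.swap k l).toEmbedding).card = n := by rw [card_map, hS]
    have hswap := unshuffle_map hS (Equiv.swap k l)
      (strictMonoOn_swap_of_val_succ hkl fun h => hk h.1)
      (strictMonoOn_swap_of_val_succ hkl fun h => h.2 hl) hS'
    have hsum' := sum_val_map_swap_add_one hkl hk hl
    have hne : k ≠ l := fun h => hk (h ▸ hl)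
    have := ih _ (by omega) _ hS' rfl
    rw [hswap, map_mul, Equiv.Perm.sign_swap hne] at this
    rw [← hsum, ← hsum', add_right_comm, pow_succ, ← this]
    simp
  · push Not at hhigh
    have hsum0 : ∑ k ∈ S, (k : ℕ) = n * (n - 1) / 2 := by
      rw [← sum_range_id, ← map_valEmbedding_eq_range_of_forall_lt hS hhigh, sum_map]
      rfl
    rw [unshuffle_eq_one hS hhigh, map_one, ← hsum, hsum0, Even.neg_one_pow ⟨_, rfl⟩]

end Unshuffle

section MixedVandermonde

variable {R : Type*} [CommRing R] {n : ℕ}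

def mixedVandermonde (n : ℕ) (x t : Fin (2 * n) → R) : Matrix (Fin (2 * n)) (Fin (2 * n)) R :=
  Matrix.of fun j k => if (j : ℕ) < n then x k ^ (j : ℕ) * t k else x k ^ (j : ℕ)

def splitVandermonde (n : ℕ) (x : Fin (2 * n) → R) (S : Finset (Fin (2 * n))) :
    Matrix (Fin (2 * n)) (Fin (2 * n)) R :=
  Matrix.of fun j k => if ((j : ℕ) < n ↔ k ∈ S) then x k ^ (j : ℕ) else 0

theorem det_mixedVandermonde_eq_sum (x t : Fin (2 * n) → R) :
    (mixedVandermonde n x t).det =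
      ∑ S : Finset (Fin (2 * n)), (∏ k ∈ S, t k) * (splitVandermonde n x S).det := by
  classical
  let u : Fin (2 * n) → Fin (2 * n) → R := fun k j =>
    if (j : ℕ) < n then x k ^ (j : ℕ) else 0
  let w : Fin (2 * n) → Fin (2 * n) → R := fun k j =>
    if (j : ℕ) < n then 0 else x k ^ (j : ℕ)
  have hsplit (S : Finset (Fin (2 * n))) : (splitVandermonde n x S)ᵀ = S.piecewise u w := by
    ext k j
    by_cases hk : k ∈ S <;> by_cases hj : (j : ℕ) < n <;> simp [hk, hj, u, w, splitVandermonde]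
  have hcols : (mixedVandermonde n x t)ᵀ = (fun k => t k • u k) + w := by
    ext k j
    by_cases hj : (j : ℕ) < n <;> simp [hj, u, w, mixedVandermonde, mul_comm]
  rw [← Matrix.det_transpose, hcols]
  refine (Matrix.detRowAlternating.toMultilinearMap.map_add_univ _ _).trans (sum_congr rfl ?_)
  intro S _
  have hpw : S.piecewise (fun k => t k • u k) w
      = S.piecewise (fun k => t k • S.piecewise u w k) (S.piecewise u w) := by
    ext k : 1
    by_cases hk : k ∈ S <;> simp [hk]
  rw [hpw, MultilinearMap.map_piecewise_smul, ← hsplit, smul_eq_mul]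
  exact congrArg _ (Matrix.det_transpose _)

theorem det_splitVandermonde_of_card_ne (x : Fin (2 * n) → R) {S : Finset (Fin (2 * n))}
    (hS : S.card ≠ n) : (splitVandermonde n x S).det = 0 := by
  rw [Matrix.det_apply]
  refine sum_eq_zero fun σ _ => ?_
  suffices ∃ k, splitVandermonde n x S (σ k) k = 0 by
    obtain ⟨k, hk⟩ := this
    rw [prod_eq_zero (f := fun i => splitVandermonde n x S (σ i) i) (mem_univ k) hk, smul_zero]
  by_contra! hσ
  have hmem (k : Fin (2 * n)) : k ∈ S ↔ (σ k : ℕ) < n := by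
    by_contra h
    exact hσ k (by simp [splitVandermonde, h, Iff.comm])
  apply hS
  have : S = (univ.filter fun j : Fin (2 * n) => (j : ℕ) < n).map σ.symm.toEmbedding := by
    ext k
    simp [hmem]
  rw [this, card_map, Fin.card_filter_val_lt]
  omega

theorem det_splitVandermonde_of_card_eq (x : Fin (2 * n) → R) {S : Finset (Fin (2 * n))}
    (hS : S.card = n) :
    (splitVandermonde n x S).det = (-1) ^ (∑ k ∈ S, (k : ℕ) + n * (n - 1) / 2) *
      (finsetVandermonde x S * ((∏ k ∈ Sᶜ, x k ^ n) * finsetVandermonde x Sᶜ)) := by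
  have hSc := card_compl_eq_of_card_eq hS
  set a := S.orderEmbOfFin hS
  set b := Sᶜ.orderEmbOfFin hSc
  have hblocks : ((splitVandermonde n x S).submatrix id (unshuffle S hS)).submatrix
      (finSumFinTwoMul n) (finSumFinTwoMul n) =
      Matrix.fromBlocks (Matrix.vandermonde (x ∘ a))ᵀ 0 0
        (Matrix.of fun i i' => x (b i') ^ n * (Matrix.vandermonde (x ∘ b))ᵀ i i') := by
    ext (i | i) (i' | i') <;>
      simp [splitVandermonde, a, b, pow_add, orderEmbOfFin_mem,
        mem_compl.mp (orderEmbOfFin_mem _ _ _)]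
  have hprod : ∏ i, x (b i) ^ n = ∏ k ∈ Sᶜ, x k ^ n := by
    conv_rhs => rw [← map_orderEmbOfFin_univ Sᶜ hSc, prod_map]
    rfl
  have hperm := Matrix.det_permute' (unshuffle S hS) (splitVandermonde n x S)
  rw [← Matrix.det_submatrix_equiv_self (finSumFinTwoMul n), hblocks,
    Matrix.det_fromBlocks_zero₁₂, Matrix.det_mul_row, Matrix.det_transpose,
    Matrix.det_transpose, det_vandermonde_comp_orderEmbOfFin, det_vandermonde_comp_orderEmbOfFin,
    hprod, sign_unshuffle] at hperm
  rw [hperm]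
  push_cast
  rw [← mul_assoc, ← pow_add, Even.neg_one_pow ⟨_, rfl⟩, one_mul]

theorem det_mixedVandermonde (x t : Fin (2 * n) → R) :
    (mixedVandermonde n x t).det = ∑ S ∈ univ.powersetCard n, (∏ k ∈ S, t k) *
      ((-1) ^ (∑ k ∈ S, (k : ℕ) + n * (n - 1) / 2) *
        (finsetVandermonde x S * ((∏ k ∈ Sᶜ, x k ^ n) * finsetVandermonde x Sᶜ))) := by
  rw [det_mixedVandermonde_eq_sum, ← sum_subset (subset_univ _) fun S _ hS => by
    rw [det_splitVandermonde_of_card_ne x fun h => hS (mem_powersetCard_univ.mpr h), mul_zero]]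
  exact sum_congr rfl fun S hS => by
    rw [det_splitVandermonde_of_card_eq x (mem_powersetCard_univ.mp hS)]

theorem pow_mul_pow_of_mul_eq_one {x y : R} (hxy : x * y = 1) {a b m : ℕ} (h : a = b + m) :
    x ^ a * y ^ m = x ^ b := by
  rw [h, pow_add, mul_assoc, ← mul_pow, hxy, one_pow, mul_one]

theorem det_mixedVandermonde_of_mul_eq_one {x y : Fin (2 * n) → R} {c : R}
    (hxy : ∀ k, x k * y k = 1) (hc : ∀ k, x k ^ (2 * n) = c) (t : Fin (2 * n) → R) :
    (mixedVandermonde n x t).det =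
      c ^ n * (∏ k, x k) ^ (n - 1) * (mixedVandermonde n y t).det := by
  let e := finSumFinTwoMul n
  let ρ : Equiv.Perm (Fin (2 * n)) := e.permCongr (Equiv.sumCongr Fin.revPerm Fin.revPerm)
  have hρ : (mixedVandermonde n x t).submatrix ρ id = Matrix.of fun j k : Fin (2 * n) =>
      (if (j : ℕ) < n then 1 else c) * (x k ^ (n - 1) * mixedVandermonde n y t j k) := by
    ext j k
    obtain ⟨i | i, rfl⟩ := e.surjective j
    · simp [ρ, e, mixedVandermonde, ← mul_assoc, i.pos,
        pow_mul_pow_of_mul_eq_one (hxy k) (show n - 1 = (n - (i + 1)) + i by omega)]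
    · simp [ρ, e, mixedVandermonde, ← mul_assoc, ← hc k, ← pow_add,
        pow_mul_pow_of_mul_eq_one (hxy k)
          (show 2 * n + (n - 1) = (n + (n - (i + 1))) + (n + i) by omega)]
  have hsign : Equiv.Perm.sign ρ = 1 := by
    rw [Equiv.Perm.sign_permCongr, Equiv.Perm.sign_sumCongr, Int.units_mul_self]
  have hrows : ∏ j : Fin (2 * n), (if (j : ℕ) < n then 1 else c) = c ^ n := by
    rw [← e.prod_comp, Fintype.prod_sum_type]
    simp [e]
  have hscale : (Matrix.of fun j k : Fin (2 * n) =>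
      (if (j : ℕ) < n then 1 else c) * (x k ^ (n - 1) * mixedVandermonde n y t j k)).det =
      (∏ j : Fin (2 * n), if (j : ℕ) < n then 1 else c) *
        ((∏ k, x k ^ (n - 1)) * (mixedVandermonde n y t).det) := by
    rw [← Matrix.det_mul_row]
    exact Matrix.det_mul_column _ _
  have := Matrix.det_permute ρ (mixedVandermonde n x t)
  rw [hρ, hscale, hsign, hrows, prod_pow, ← mul_assoc] at this
  simpa using this.symm

theorem mixedVandermonde_one (x : Fin (2 * n) → R) :
    mixedVandermonde n x (fun _ => 1) = (Matrix.vandermonde x)ᵀ := by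
  ext j k
  simp [mixedVandermonde, Matrix.vandermonde]

end MixedVandermonde

section OmegaRoot

variable {n : ℕ}

theorem omegaRoot_ne_zero (n k : ℕ) : omegaRoot n k ≠ 0 :=
  Complex.exp_ne_zero _

theorem omegaRoot_eq_pow (n k : ℕ) :
    omegaRoot n k = Complex.exp (2 * π * I / (4 * n : ℕ)) ^ (2 * k + n % 2) := by
  rw [omegaRoot, ← Complex.exp_nat_mul]
  congr 1
  push_cast
  ring

theorem exp_two_pi_I_div_four_mul_pow_self (hn : n ≠ 0) :
    Complex.exp (2 * π * I / (4 * n : ℕ)) ^ n = I := by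
  rw [← Complex.exp_nat_mul]
  convert Complex.exp_pi_div_two_mul_I using 2
  push_cast
  field_simp
  ring

theorem omegaRoot_pow_self (hn : n ≠ 0) (k : ℕ) :
    omegaRoot n k ^ n = (-1) ^ k * I ^ (n % 2) := by
  rw [omegaRoot_eq_pow, ← pow_mul, mul_comm (2 * k + n % 2), pow_mul,
    exp_two_pi_I_div_four_mul_pow_self hn, pow_add, pow_mul, I_sq]

theorem conj_omegaRoot (n k : ℕ) : (starRingEnd ℂ) (omegaRoot n k) = (omegaRoot n k)⁻¹ := by
  rw [omegaRoot, ← Complex.exp_conj, ← Complex.exp_neg]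
  congr 1
  simp [map_div₀, map_ofNat]
  ring

theorem omegaRoot_injective (hn : n ≠ 0) :
    Function.Injective fun k : Fin (2 * n) => omegaRoot n k := by
  intro a b hab
  have hη := Complex.isPrimitiveRoot_exp (4 * n) (by omega)
  simp only [omegaRoot_eq_pow] at hab
  have := hη.pow_inj (by omega) (by omega) hab
  exact Fin.ext (by omega)

theorem sum_omegaRoot (hn : n ≠ 0) : ∑ k ∈ range (2 * n), omegaRoot n k = 0 := by
  have hη := Complex.isPrimitiveRoot_exp (4 * n) (by omega)
  have hη2 := hη.pow (by omega) (show 4 * n = 2 * (2 * n) by ring)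
  simp only [omegaRoot_eq_pow, pow_add, pow_mul, ← sum_mul, hη2.geom_sum_eq_zero (by omega),
    zero_mul]

/-- `k ↦ -(k + [n]₂) mod 2n`, the action of complex conjugation on the indices of the `ω_k`. -/
def conjPerm (n : ℕ) : Equiv.Perm (Fin (2 * n)) :=
  Function.Involutive.toPerm
    (fun k => ⟨if (k : ℕ) + n % 2 = 0 then 0 else 2 * n - n % 2 - k, by split_ifs <;> omega⟩)
    (fun k => Fin.ext (by dsimp only; split_ifs <;> omega))

theorem conjPerm_val (k : Fin (2 * n)) :
    (conjPerm n k : ℕ) = if (k : ℕ) + n % 2 = 0 then 0 else 2 * n - n % 2 - k :=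
  rfl

theorem omegaRoot_conjPerm (hn : n ≠ 0) (k : Fin (2 * n)) :
    omegaRoot n (conjPerm n k) = (omegaRoot n k)⁻¹ := by
  have hη := Complex.isPrimitiveRoot_exp (4 * n) (by omega)
  refine eq_inv_of_mul_eq_one_left ?_
  rw [omegaRoot_eq_pow, omegaRoot_eq_pow, ← pow_add]
  have : (conjPerm n k : ℕ) + k + n % 2 = 0 ∨ (conjPerm n k : ℕ) + k + n % 2 = 2 * n := by
    rw [conjPerm_val]
    split_ifs <;> omega
  rcases this with h | h
  · rw [show 2 * (conjPerm n k : ℕ) + n % 2 + (2 * k + n % 2) = 0 by omega, pow_zero]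
  · rw [show 2 * (conjPerm n k : ℕ) + n % 2 + (2 * k + n % 2) = 4 * n by omega, hη.pow_eq_one]

end OmegaRoot

section Expansion

variable {n : ℕ}

theorem even_sum_range_two_mul_add (n : ℕ) : Even (∑ k ∈ range (2 * n), k + n) := by
  induction n with
  | zero => simp
  | succ m ih =>
    obtain ⟨r, hr⟩ := ih
    rw [show 2 * (m + 1) = 2 * m + 1 + 1 by ring, sum_range_succ, sum_range_succ]
    exact ⟨r + 2 * m + 1, by omega⟩

theorem neg_one_pow_sum_add_sum_compl (S : Finset (Fin (2 * n))) :
    (-1 : ℂ) ^ (∑ k ∈ S, (k : ℕ) + n * (n - 1) / 2) * (-1) ^ (∑ k ∈ Sᶜ, (k : ℕ)) =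
      (-1) ^ (n * (n + 1) / 2) := by
  have hsucc : n * (n + 1) / 2 = ∑ i ∈ range n, i + n := by
    rw [← sum_range_succ, sum_range_id, Nat.add_sub_cancel, mul_comm]
  rw [← pow_add, add_right_comm, sum_add_sum_compl, Fin.sum_univ_eq_sum_range (fun k => k),
    ← sum_range_id, hsucc, neg_one_pow_eq_pow_mod_two,
    neg_one_pow_eq_pow_mod_two (n := ∑ i ∈ range n, i + n)]
  obtain ⟨m, hm⟩ := even_sum_range_two_mul_add n
  congr 1
  omega

theorem vdmProd_map_valEmbedding (S : Finset (Fin (2 * n))) :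
    vdmProd n (S.map Fin.valEmbedding) =
      finsetVandermonde (fun k : Fin (2 * n) => omegaRoot n k) S :=
  finsetVandermonde_map (Fin.valOrderEmb _) _ S

theorem cCoeff_map_valEmbedding (hn : n ≠ 0) {S : Finset (Fin (2 * n))} (hS : S.card = n) :
    cCoeff n (S.map Fin.valEmbedding) =
      (-1) ^ (∑ k ∈ S, (k : ℕ) + n * (n - 1) / 2) *
        (finsetVandermonde (fun k : Fin (2 * n) => omegaRoot n k) S *
          ((∏ k ∈ Sᶜ, omegaRoot n k ^ n) *
            finsetVandermonde (fun k : Fin (2 * n) => omegaRoot n k) Sᶜ)) := by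
  have hcompl : range (2 * n) \ S.map Fin.valEmbedding = Sᶜ.map Fin.valEmbedding := by
    rw [← Nat.Iio_eq_range, ← Fin.map_valEmbedding_univ, ← Finset.map_sdiff,
      compl_eq_univ_sdiff]
  have hpow :
      ∏ k ∈ Sᶜ, omegaRoot n k ^ n = (-1) ^ (∑ k ∈ Sᶜ, (k : ℕ)) * I ^ (n % 2 * n) := by
    simp only [omegaRoot_pow_self hn]
    rw [prod_mul_distrib, prod_pow_eq_pow_sum, prod_const, card_compl_eq_of_card_eq hS, ← pow_mul]
  rw [cCoeff, hcompl, vdmProd_map_valEmbedding, vdmProd_map_valEmbedding, hpow,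
    ← neg_one_pow_sum_add_sum_compl S]
  ring

theorem det_mixedVandermonde_omegaRoot (hn : n ≠ 0) (t : ℕ → ℂ) :
    (mixedVandermonde n (fun k => omegaRoot n k) (fun k => t k)).det =
      ∑ I ∈ (range (2 * n)).powersetCard n, cCoeff n I * ∏ k ∈ I, t k := by
  rw [det_mixedVandermonde, ← Nat.Iio_eq_range, ← Fin.map_valEmbedding_univ, powersetCard_map,
    sum_map]
  refine sum_congr rfl fun S hS => ?_
  rw [RelEmbedding.coe_toEmbedding, mapEmbedding_apply,
    cCoeff_map_valEmbedding hn (mem_powersetCard_univ.mp hS)]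
  simp [mul_comm]

theorem det_mixedVandermonde_omegaRoot_comp_conjPerm (hn : n ≠ 0) (s : Fin (2 * n) → ℂ) :
    (mixedVandermonde n (fun k => omegaRoot n k) (s ∘ conjPerm n)).det =
      (mixedVandermonde n (fun k => omegaRoot n k) s).det := by
  have hinv (k : Fin (2 * n)) : omegaRoot n k * omegaRoot n (conjPerm n k) = 1 := by
    rw [omegaRoot_conjPerm hn, mul_inv_cancel₀ (omegaRoot_ne_zero _ _)]
  have hc (k : Fin (2 * n)) : omegaRoot n k ^ (2 * n) = (I ^ (n % 2)) ^ 2 := by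
    rw [pow_mul', omegaRoot_pow_self hn, mul_pow, ← pow_mul, Even.neg_one_pow ⟨k, by ring⟩,
      one_mul]
  obtain ⟨μ, hμ⟩ : ∃ μ : ℂ, ∀ s : Fin (2 * n) → ℂ,
      (mixedVandermonde n (fun k => omegaRoot n k) (s ∘ conjPerm n)).det =
        μ * (mixedVandermonde n (fun k => omegaRoot n k) s).det := by
    refine ⟨((I ^ (n % 2)) ^ 2) ^ n * (∏ k : Fin (2 * n), omegaRoot n k) ^ (n - 1) *
      Equiv.Perm.sign (conjPerm n), fun s => ?_⟩
    rw [det_mixedVandermonde_of_mul_eq_one hinv hc]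
    simp only [mul_assoc]
    rw [← Matrix.det_permute']
    rfl
  -- At `s = 1` both sides are the nonzero Vandermonde determinant of the `ω_k`.
  have hV : (mixedVandermonde n (fun k => omegaRoot n k) fun _ => 1).det ≠ 0 := by
    rw [mixedVandermonde_one, Matrix.det_transpose]
    exact Matrix.det_vandermonde_ne_zero_iff.mpr (omegaRoot_injective hn)
  have hμ1 : μ = 1 := mul_right_cancel₀ hV ((hμ fun _ => 1).symm.trans (one_mul _).symm)
  rw [hμ, hμ1, one_mul]

noncomputable def cExpSum (n : ℕ) (v : ℕ → ℂ) : ℂ :=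
  ∑ I ∈ (range (2 * n)).powersetCard n, cCoeff n I * Complex.exp (∑ k ∈ I, v k)

theorem cExpSum_eq_det (hn : n ≠ 0) (v : ℕ → ℂ) :
    cExpSum n v =
      (mixedVandermonde n (fun k => omegaRoot n k) fun k => Complex.exp (v k)).det := by
  simp only [cExpSum, Complex.exp_sum,
    det_mixedVandermonde_omegaRoot hn (fun k => Complex.exp (v k))]

theorem cCoeff_sdiff {I : Finset ℕ} (hI : I ⊆ range (2 * n)) :
    cCoeff n (range (2 * n) \ I) = cCoeff n I := by
  rw [cCoeff, cCoeff, Finset.sdiff_sdiff_eq_self hI]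
  ring

theorem cExpSum_neg {v : ℕ → ℂ} (hv : ∑ k ∈ range (2 * n), v k = 0) :
    cExpSum n (fun k => -v k) = cExpSum n v := by
  let P := (range (2 * n)).powersetCard n
  have hmem : ∀ I ∈ P, range (2 * n) \ I ∈ P := by
    intro I hI
    rw [mem_powersetCard] at hI ⊢
    rw [card_sdiff_of_subset hI.1, card_range, hI.2]
    exact ⟨sdiff_subset, by omega⟩
  have hinv : ∀ I ∈ P, range (2 * n) \ (range (2 * n) \ I) = I :=
    fun I hI => Finset.sdiff_sdiff_eq_self (mem_powersetCard.mp hI).1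
  refine sum_nbij' (range (2 * n) \ ·) (range (2 * n) \ ·) hmem hmem hinv hinv fun I hI => ?_
  have hsub := (mem_powersetCard.mp hI).1
  have hsum : ∑ k ∈ I, -v k = ∑ k ∈ range (2 * n) \ I, v k := by
    rw [sum_neg_distrib, neg_eq_iff_add_eq_zero, add_comm, sum_sdiff hsub, hv]
  rw [cCoeff_sdiff hsub, hsum]

theorem cExpSum_conj (hn : n ≠ 0) (z : ℂ) :
    cExpSum n (fun k => (starRingEnd ℂ) (omegaRoot n k) * z) =
      cExpSum n (fun k => omegaRoot n k * z) := by
  rw [cExpSum_eq_det hn, cExpSum_eq_det hn, ← det_mixedVandermonde_omegaRoot_comp_conjPerm hn]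
  congr 2
  ext k
  simp [omegaRoot_conjPerm hn, conj_omegaRoot]

theorem cosh_re_mul_mul_cos_im_mul (s z : ℂ) :
    Complex.cosh (s.re * z) * Complex.cos (s.im * z) =
      (Complex.exp (s * z) + Complex.exp (-(s * z)) + Complex.exp ((starRingEnd ℂ) s * z) +
        Complex.exp (-((starRingEnd ℂ) s * z))) / 4 := by
  have hs : s * z = s.re * z + s.im * z * I := by
    conv_lhs => rw [← re_add_im s]
    ring
  have hs' : (starRingEnd ℂ) s * z = s.re * z - s.im * z * I := by
    conv_lhs => rw [← re_add_im s]
    simp only [map_add, map_mul, conj_ofReal, conj_I]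
    ring
  rw [hs, hs', Complex.cosh, Complex.cos]
  simp only [neg_add, neg_sub, Complex.exp_add, Complex.exp_sub, Complex.exp_neg, neg_mul]
  field_simp
  ring

theorem sum_cCoeff_mul_cosh_mul_cos (hn : n ≠ 0) (z : ℂ) :
    ∑ I ∈ (range (2 * n)).powersetCard n,
        cCoeff n I * Complex.cosh ((((∑ k ∈ I, omegaRoot n k).re : ℝ) : ℂ) * z) *
          Complex.cos ((((∑ k ∈ I, omegaRoot n k).im : ℝ) : ℂ) * z) =
      cExpSum n (fun k => omegaRoot n k * z) := by
  have hneg := cExpSum_neg (v := fun k => omegaRoot n k * z)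
    (by rw [← sum_mul, sum_omegaRoot hn, zero_mul])
  have hneg' := cExpSum_neg (v := fun k => (starRingEnd ℂ) (omegaRoot n k) * z)
    (by rw [← sum_mul, ← map_sum, sum_omegaRoot hn, map_zero, zero_mul])
  calc
    _ = (cExpSum n (fun k => omegaRoot n k * z) + cExpSum n (fun k => -(omegaRoot n k * z)) +
          cExpSum n (fun k => (starRingEnd ℂ) (omegaRoot n k) * z) +
          cExpSum n (fun k => -((starRingEnd ℂ) (omegaRoot n k) * z))) / 4 := by
      simp only [cExpSum, ← sum_add_distrib, sum_div]
      refine sum_congr rfl fun I _ => ?_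
      rw [mul_assoc, cosh_re_mul_mul_cos_im_mul]
      simp only [map_sum, sum_mul, ← sum_neg_distrib]
      ring
    _ = cExpSum n (fun k => omegaRoot n k * z) := by
      rw [hneg, hneg', cExpSum_conj hn]
      ring

end Expansion

theorem det_An_eq_pow_mul_det_mixedVandermonde (n : ℕ) (z : ℂ) :
    (An n z).det = z ^ (n * (2 * n - 1)) *
      (mixedVandermonde n (fun k => omegaRoot n k) fun k =>
        Complex.exp (omegaRoot n k * z)).det := by
  have hrows : An n z = Matrix.of fun j k : Fin (2 * n) => z ^ (j : ℕ) *
      mixedVandermonde n (fun k => omegaRoot n k)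
        (fun k => Complex.exp (omegaRoot n k * z)) j k := by
    ext j k
    simp only [An, mixedVandermonde, Matrix.of_apply]
    split_ifs <;> ring
  rw [hrows, Matrix.det_mul_column, prod_pow_eq_pow_sum, Fin.sum_univ_eq_sum_range (fun j => j),
    sum_range_id, mul_assoc, Nat.mul_div_cancel_left _ two_pos]

/-- det(A_n(z)) = z^{n(2n−1)} · ∑_{I⊆{0,…,2n−1}, |I|=n} c_I cosh(α_I z) cos(β_I z),
where α_I = Re(∑_{k∈I} ω_k) and β_I = Im(∑_{k∈I} ω_k). -/
theorem det_An (n : ℕ) (hn : 1 ≤ n) (z : ℂ) :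
    (An n z).det
      = z ^ (n * (2 * n - 1)) *
          ∑ I ∈ (Finset.range (2 * n)).powersetCard n,
            cCoeff n I * Complex.cosh ((((∑ k ∈ I, omegaRoot n k).re : ℝ) : ℂ) * z) *
              Complex.cos ((((∑ k ∈ I, omegaRoot n k).im : ℝ) : ℂ) * z) := by
  have hn0 : n ≠ 0 := by omega
  rw [det_An_eq_pow_mul_det_mixedVandermonde, sum_cCoeff_mul_cosh_mul_cos hn0,
    cExpSum_eq_det hn0]
end

section
/- Let n ≥ 1 be an integer. If n is even, then ∑_{k=−n/2+1}^{n/2} exp(iπk/n) = i + cot(π/(2n)); if n is odd, then ∑_{k=−(n−1)/2}^{(n−1)/2} exp(iπ(2k+1)/(2n)) = i + cot(π/(2n)). In other words, the sum of i together with all the numbers ω_k = exp(iπ(2k + (n mod 2))/(2n)), k ∈ {0,…,2n−1}, having strictly positive real part equals i + cot(π/(2n)). -/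
/-!
Put `θ = π / (2n)`. After shifting indices by the period `2n`, the `ω_k` with positive real part
are the `exp (i j θ)` with `j = 2 - n, 4 - n, …, n - 2`, and the extra summand `i` is the term
`j = n`. The completed sum is `exp (iθ) ∑_{t<n} exp (i(2t + 1 - n)θ) = exp (iθ) sin (nθ) / sin θ`,
which equals `exp (iθ) / sin θ = cot θ + i` because `nθ = π / 2`. The even and odd sums of the
statement are the same completed sum with centred indices.
-/

open Real Complex Finset

theorem Int.sum_Ico_add_natCast {M : Type*} [AddCommMonoid M] (f : ℤ → M) (a : ℤ) (n : ℕ) :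
    ∑ k ∈ Ico a (a + n), f k = ∑ t ∈ Finset.range n, f (a + t) := by
  simp [Int.Ico_eq_finset_map]

theorem Function.Periodic.sum_Ico_add_natCast {M : Type*} [AddCancelCommMonoid M] {f : ℤ → M}
    {N : ℕ} (hf : Function.Periodic f N) (a b : ℤ) :
    ∑ k ∈ Ico a (a + N), f k = ∑ k ∈ Ico b (b + N), f k := by
  have hshift (a : ℤ) : ∑ k ∈ Ico (a + 1) (a + 1 + N), f k = ∑ k ∈ Ico a (a + N), f k := by
    rw [Int.sum_Ico_add_natCast, Int.sum_Ico_add_natCast]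
    apply add_right_cancel (b := f a)
    calc ∑ t ∈ range N, f (a + 1 + t) + f a = ∑ t ∈ range (N + 1), f (a + t) := by
          simp only [sum_range_succ', Nat.cast_add, Nat.cast_one, Nat.cast_zero, add_zero,
            add_right_comm a, add_assoc]
      _ = ∑ t ∈ range N, f (a + t) + f a := by rw [sum_range_succ, hf a]
  suffices ∀ a : ℤ, ∑ k ∈ Ico a (a + N), f k = ∑ k ∈ Ico (0 : ℤ) N, f k by rw [this a, this b]
  intro a
  induction a using Int.induction_on with
  | zero => rw [zero_add]
  | succ a ih => rw [hshift, ih]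
  | pred a ih => rw [← ih, ← hshift, sub_add_cancel]

theorem Real.cos_pos_iff_lt_pi_div_two {x : ℝ} (hx₁ : -(π / 2) < x) (hx₂ : x ≤ π + π / 2) :
    0 < Real.cos x ↔ x < π / 2 :=
  ⟨fun h => not_le.mp fun hx => (Real.cos_nonpos_of_pi_div_two_le_of_le hx hx₂).not_gt h,
    fun hx => Real.cos_pos_of_mem_Ioo ⟨hx₁, hx⟩⟩

/-- A Dirichlet-kernel identity; multiplying by `2 i sin θ` makes the sum telescope. -/
theorem Complex.sum_range_exp_mul_sin (θ : ℂ) (n : ℕ) :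
    (∑ t ∈ range n, cexp ((2 * t + 1 - n) * θ * I)) * Complex.sin θ = Complex.sin (n * θ) := by
  set f : ℕ → ℂ := fun t => cexp ((2 * t - n) * θ * I)
  have hstep (t : ℕ) : cexp ((2 * t + 1 - n) * θ * I) * (cexp (θ * I) - cexp (-θ * I))
      = f (t + 1) - f t := by
    simp only [f, mul_sub, ← Complex.exp_add]
    push_cast
    ring_nf
  have htelescope :
      (∑ t ∈ range n, cexp ((2 * t + 1 - n) * θ * I)) * (cexp (θ * I) - cexp (-θ * I))
        = cexp (n * θ * I) - cexp (-(n * θ) * I) := by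
    rw [sum_mul, sum_congr rfl fun t _ => hstep t, sum_range_sub]
    simp only [f]
    push_cast
    ring_nf
  simp only [Complex.sin]
  linear_combination (-I / 2) * htelescope

theorem sum_range_exp_eq_I_add_cot (n : ℕ) (hn : n ≠ 0) :
    ∑ t ∈ range n, cexp (I * π * (2 * t + 2 - n) / (2 * n))
      = I + (Real.cot (π / (2 * n)) : ℂ) := by
  obtain ⟨θ, hθ⟩ : ∃ θ : ℝ, θ = π / (2 * n) := ⟨_, rfl⟩
  have hθ_pos : 0 < θ := by rw [hθ]; positivity
  have hθ_lt : θ < π := by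
    have : (1 : ℝ) < 2 * n := by norm_cast; omega
    rw [hθ]; exact div_lt_self pi_pos this
  have hsin : (Real.sin θ : ℂ) ≠ 0 :=
    ofReal_ne_zero.mpr (Real.sin_pos_of_pos_of_lt_pi hθ_pos hθ_lt).ne'
  have hθC : (θ : ℂ) = π / (2 * n) := by rw [hθ]; push_cast; rfl
  have hterm (t : ℕ) : cexp (I * π * (2 * t + 2 - n) / (2 * n))
      = cexp (θ * I) * cexp ((2 * t + 1 - n) * θ * I) := by
    rw [← Complex.exp_add, hθC]; congr 1; field_simp; ring
  -- `n θ = π / 2`, so the Dirichlet kernel equals `1 / sin θ`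
  have hkernel := Complex.sum_range_exp_mul_sin θ n
  rw [show (n : ℂ) * θ = (π / 2 : ℝ) by rw [hθC]; push_cast; field_simp, ← ofReal_sin,
    ← ofReal_sin, Real.sin_pi_div_two, ofReal_one] at hkernel
  rw [sum_congr rfl fun t _ => hterm t, ← mul_sum, eq_div_of_mul_eq hsin hkernel, ← hθ,
    Complex.exp_mul_I, ← ofReal_cos, ← ofReal_sin, Real.cot_eq_cos_div_sin, ofReal_div]
  field_simp
  ring

/-- `omegaRoot n k` is `omegaRootInt n [n]₂ k`; the integer index lets a full period be centred
where the real part is positive. -/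
noncomputable def omegaRootInt (n : ℕ) (c : ℝ) (k : ℤ) : ℂ :=
  cexp (I * π * (2 * k + c) / (2 * n))

theorem omegaRoot_eq_omegaRootInt (n k : ℕ) : omegaRoot n k = omegaRootInt n (n % 2 : ℕ) k := by
  simp only [omegaRoot, omegaRootInt, Int.cast_natCast, ofReal_natCast]

section OmegaRootInt

variable {n : ℕ} {a : ℤ} {c : ℝ}

theorem omegaRootInt_periodic : Function.Periodic (omegaRootInt n c) ↑(2 * n) := by
  intro k
  rcases eq_or_ne n 0 with rfl | hn
  · simp
  refine (congrArg cexp ?_).trans (Complex.exp_periodic _)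
  push_cast
  field_simp
  ring

theorem sum_Ico_omegaRootInt (hn : n ≠ 0) (hac : 2 * a + c = 2 - n) :
    ∑ k ∈ Ico a (a + n), omegaRootInt n c k = I + (Real.cot (π / (2 * n)) : ℂ) := by
  rw [Int.sum_Ico_add_natCast, ← sum_range_exp_eq_I_add_cot n hn]
  refine sum_congr rfl fun t _ => ?_
  have hacC : 2 * (a : ℂ) + c = 2 - n := by exact_mod_cast hac
  rw [omegaRootInt]
  push_cast
  congr 1
  linear_combination I * π / (2 * n) * hacC

theorem omegaRootInt_eq_I (hn : n ≠ 0) (hac : 2 * a + c = 2 - n) :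
    omegaRootInt n c (a + n - 1) = I := by
  have hacC : 2 * (a : ℂ) + c = 2 - n := by exact_mod_cast hac
  refine (congrArg cexp ?_).trans Complex.exp_pi_div_two_mul_I
  rw [div_eq_iff (by simpa using hn)]
  push_cast
  linear_combination I * π * hacC

theorem re_omegaRootInt_pos_iff (hn : n ≠ 0) (hac : 2 * a + c = 2 - n) {k : ℤ}
    (hk : k ∈ Ico a (a + 2 * n)) :
    0 < (omegaRootInt n c k).re ↔ k < a + n - 1 := by
  have hnR : (0 : ℝ) < n := by positivity
  have hscale (x : ℝ) : π * x / (2 * n) = x / n * (π / 2) := by field_simp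
  rw [omegaRootInt,
    show I * π * (2 * k + c) / (2 * n) = ((π * (2 * k + c) / (2 * n) : ℝ) : ℂ) * I by
      push_cast; ring, exp_ofReal_mul_I_re, hscale]
  obtain ⟨hk₁, hk₂⟩ := mem_Ico.mp hk
  have hk₁' : (a : ℝ) ≤ k := by exact_mod_cast hk₁
  have hk₂' : (k : ℝ) + 1 ≤ a + 2 * n := by exact_mod_cast hk₂
  have hlower : -1 < (2 * k + c) / n := by rw [lt_div_iff₀ hnR]; linarith
  have hupper : (2 * k + c) / n ≤ 3 := by rw [div_le_iff₀ hnR]; linarith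
  rw [Real.cos_pos_iff_lt_pi_div_two (by nlinarith [pi_pos]) (by nlinarith [pi_pos]),
    mul_lt_iff_lt_one_left (by positivity), div_lt_one hnR, ← Int.cast_lt (R := ℝ)]
  push_cast
  constructor <;> intro <;> linarith

theorem filter_Ico_re_omegaRootInt_pos (hn : n ≠ 0) (hac : 2 * a + c = 2 - n) :
    (Ico a (a + 2 * n)).filter (fun k => 0 < (omegaRootInt n c k).re) = Ico a (a + n - 1) := by
  ext k
  rw [mem_filter]
  constructor
  · rintro ⟨hk, hpos⟩
    exact mem_Ico.mpr ⟨(mem_Ico.mp hk).1, (re_omegaRootInt_pos_iff hn hac hk).mp hpos⟩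
  · intro hk
    obtain ⟨hak, hkn⟩ := mem_Ico.mp hk
    have hk' : k ∈ Ico a (a + 2 * n) := mem_Ico.mpr ⟨hak, by omega⟩
    exact ⟨hk', (re_omegaRootInt_pos_iff hn hac hk').mpr hkn⟩

theorem I_add_sum_filter_re_omegaRootInt_pos (hn : n ≠ 0) (hac : 2 * a + c = 2 - n) (b : ℤ) :
    I + ∑ k ∈ (Ico b (b + 2 * n)).filter (fun k => 0 < (omegaRootInt n c k).re),
        omegaRootInt n c k
      = I + (Real.cot (π / (2 * n)) : ℂ) := by
  have hperiodic : Function.Periodic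
      (fun k => if 0 < (omegaRootInt n c k).re then omegaRootInt n c k else 0) ↑(2 * n) := by
    intro k
    simp only [omegaRootInt_periodic k]
  have hshift := hperiodic.sum_Ico_add_natCast b a
  push_cast at hshift
  have hIco : Ico a (a + n) = insert (a + n - 1) (Ico a (a + n - 1)) := by
    ext; simp only [mem_insert, mem_Ico]; omega
  rw [sum_filter, hshift, ← sum_filter, filter_Ico_re_omegaRootInt_pos hn hac,
    ← sum_Ico_omegaRootInt hn hac, hIco, sum_insert (by simp), omegaRootInt_eq_I hn hac]

end OmegaRootInt

theorem I_add_sum_filter_re_omegaRoot_pos {n : ℕ} (hn : n ≠ 0) :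
    I + ∑ k ∈ (range (2 * n)).filter (fun k => 0 < (omegaRoot n k).re), omegaRoot n k
      = I + (Real.cot (π / (2 * n)) : ℂ) := by
  obtain ⟨a, ha⟩ : ∃ a : ℤ, 2 * a + (n % 2 : ℕ) + n = 2 := ⟨1 - ((n + 1) / 2 : ℕ), by omega⟩
  have hac : 2 * (a : ℝ) + ((n % 2 : ℕ) : ℝ) = 2 - n := by
    have := congrArg (Int.cast : ℤ → ℝ) ha
    simp only [Int.cast_add, Int.cast_mul, Int.cast_ofNat, Int.cast_natCast] at this
    linarith
  have hwindow := Int.sum_Ico_add_natCast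
    (fun k => if 0 < (omegaRootInt n (n % 2 : ℕ) k).re then omegaRootInt n (n % 2 : ℕ) k else 0)
    0 (2 * n)
  push_cast [zero_add] at hwindow
  rw [← I_add_sum_filter_re_omegaRootInt_pos hn hac 0, sum_filter, sum_filter, zero_add,
    hwindow]
  simp only [omegaRoot_eq_omegaRootInt]

/-- If n is even then ∑_{k=−n/2+1}^{n/2} exp(iπk/n) = i + cot(π/(2n)); if n is odd then
∑_{k=−(n−1)/2}^{(n−1)/2} exp(iπ(2k+1)/(2n)) = i + cot(π/(2n)).  In other words, the sum
of i together with all the ω_k, k ∈ {0,…,2n−1}, having strictly positive real part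
equals i + cot(π/(2n)). -/
theorem dominant_root_sum (n : ℕ) (hn : 1 ≤ n) :
    (Even n →
      ∑ k ∈ Finset.Icc (-(n : ℤ) / 2 + 1) ((n : ℤ) / 2),
          Complex.exp (Complex.I * (Real.pi : ℂ) * (k : ℂ) / (n : ℂ))
        = Complex.I + ((Real.cot (π / (2 * n)) : ℝ) : ℂ)) ∧
    (Odd n →
      ∑ k ∈ Finset.Icc (-(((n : ℤ) - 1) / 2)) (((n : ℤ) - 1) / 2),
          Complex.exp (Complex.I * (Real.pi : ℂ) * (2 * (k : ℂ) + 1) / (2 * (n : ℂ)))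
        = Complex.I + ((Real.cot (π / (2 * n)) : ℝ) : ℂ)) ∧
    (Complex.I + ∑ k ∈ (Finset.range (2 * n)).filter (fun k => 0 < (omegaRoot n k).re),
        omegaRoot n k
      = Complex.I + ((Real.cot (π / (2 * n)) : ℝ) : ℂ)) := by
  have hn0 : n ≠ 0 := by omega
  refine ⟨fun ⟨m, hm⟩ => ?_, fun ⟨m, hm⟩ => ?_, I_add_sum_filter_re_omegaRoot_pos hn0⟩
  · have hIcc : Icc (-(n : ℤ) / 2 + 1) ((n : ℤ) / 2) = Ico (1 - m : ℤ) (1 - m + n) := by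
      ext; simp only [mem_Icc, mem_Ico]; omega
    rw [hIcc, ← sum_Ico_omegaRootInt hn0 (a := 1 - m) (c := 0) (by push_cast [hm]; ring)]
    refine sum_congr rfl fun k _ => ?_
    rw [omegaRootInt]
    congr 1
    push_cast
    field_simp
    ring
  · have hIcc : Icc (-(((n : ℤ) - 1) / 2)) (((n : ℤ) - 1) / 2) = Ico (-m : ℤ) (-m + n) := by
      ext; simp only [mem_Icc, mem_Ico]; omega
    rw [hIcc, ← sum_Ico_omegaRootInt hn0 (a := -m) (c := 1) (by push_cast [hm]; ring)]
    simp only [omegaRootInt, ofReal_one]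
end
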